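/- Let Q be a family of polynomial vectors, where for each n ≥ 0, Qₙ = (Qₙ,₀, …, Qₙ,ₙ) with entries in ℝ[x,y], and Q₀,₀ = 1. Suppose there are real matrices C₁⁽ⁿ⁾, C₂⁽ⁿ⁾ of size (n+1)×(n+1) for each n ≥ 0, and D₁⁽ⁿ⁾, D₂⁽ⁿ⁾ of size (n+1)×n for each n ≥ 1, such that: (i) x·Q₀,₀ = Q₁,₀ + (C₁⁽⁰⁾)₀₀·Q₀,₀ and y·Q₀,₀ = Q₁,₁ + (C₂⁽⁰⁾)₀₀·Q₀,₀; (ii) for every n ≥ 1 and k = 0,…,n: x·Qₙ,ₖ = Q_{n+1},ₖ + Σ_{j=0}^{n} (C₁⁽ⁿ⁾)_{kj} Qₙ,ⱼ + Σ_{j=0}^{n−1} (D₁⁽ⁿ⁾)_{kj} Q_{n−1},ⱼ and y·Qₙ,ₖ = Q_{n+1},ₖ₊₁ + Σ_{j=0}^{n} (C₂⁽ⁿ⁾)_{kj} Qₙ,ⱼ + Σ_{j=0}^{n−1} (D₂⁽ⁿ⁾)_{kj} Q_{n−1},ⱼ; and (iii) C₁⁽ⁿ⁾ ⇌ C₂⁽ⁿ⁾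 for all n ≥ 0 and D₁⁽ⁿ⁾ ⇌ D₂⁽ⁿ⁾ for all n ≥ 1. Then every polynomial vector Qₙ is reflexive, i.e., σ(Qₙ,ₖ) = Qₙ,ₙ₋ₖ for all n ≥ 0 and 0 ≤ k ≤ n. -/

import Mathlib

open MvPolynomial

/-- The ℝ-algebra automorphism of `ℝ[x,y]` interchanging the two variables. -/
noncomputable def swapVars : MvPolynomial (Fin 2) ℝ →ₐ[ℝ] MvPolynomial (Fin 2) ℝ :=
  MvPolynomial.rename ⇑(Equiv.swap (0 : Fin 2) 1)

/-- `X ⇌ Y`: each of `X`, `Y` is the reverse of the other, i.e.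
`xᵢⱼ = y_{m-i, n-j}` for all `i`, `j` (indices starting at `0`). -/
def ReverseRel {m n : ℕ} (X Y : Matrix (Fin m) (Fin n) ℝ) : Prop :=
  ∀ i j, X i j = Y i.rev j.rev

/-!
Solving the `x`-relation for `Qₙ₊₁,ₖ` and applying `σ` turns it, via the reflexivity of `Qₙ`
and `Qₙ₋₁` and the symmetries `C₁ ⇌ C₂`, `D₁ ⇌ D₂`, into the `y`-relation solved for
`Qₙ₊₁,ₙ₊₁₋ₖ`. This gives `σ(Qₙ₊₁,ₖ) = Qₙ₊₁,ₙ₊₁₋ₖ` for `k ≤ n`; the remaining entry `k = n + 1`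
follows because `σ` is an involution. A two-step induction on `n` concludes.
-/

lemma swapVars_involutive : Function.Involutive swapVars := fun p => by
  rw [swapVars, rename_rename, ← Equiv.coe_trans, Equiv.swap_swap, Equiv.coe_refl, rename_id,
    AlgHom.id_apply]

lemma swapVars_X_zero : swapVars (X 0 : MvPolynomial (Fin 2) ℝ) = X 1 := by
  simp [swapVars]

def IsReflexive {n : ℕ} (v : Fin n → MvPolynomial (Fin 2) ℝ) : Prop :=
  ∀ k, swapVars (v k) = v k.rev

lemma isReflexive_fin_one {v : Fin 1 → MvPolynomial (Fin 2) ℝ} (h : swapVars (v 0) = v 0) :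
    IsReflexive v := by
  intro k
  rwa [Fin.fin_one_eq_zero k]

lemma IsReflexive.of_castSucc {n : ℕ} {v : Fin (n + 2) → MvPolynomial (Fin 2) ℝ}
    (h : ∀ k : Fin (n + 1), swapVars (v k.castSucc) = v k.castSucc.rev) : IsReflexive v := by
  intro k
  rcases Fin.eq_castSucc_or_eq_last k with ⟨k, rfl⟩ | rfl
  · exact h k
  · have h₀ : v (Fin.last (n + 1)) = swapVars (v 0) := by
      simpa [Fin.rev_castSucc] using (h 0).symm
    rw [h₀, swapVars_involutive, Fin.rev_last]

lemma IsReflexive.swapVars_sum_smul {m n : ℕ} {v : Fin n → MvPolynomial (Fin 2) ℝ}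
    (hv : IsReflexive v) {A B : Matrix (Fin m) (Fin n) ℝ} (hAB : ReverseRel A B) (k : Fin m) :
    swapVars (∑ j, A k j • v j) = ∑ j, B k.rev j • v j := by
  rw [map_sum, ← Equiv.sum_comp Fin.revPerm]
  refine Finset.sum_congr rfl fun j _ => ?_
  rw [map_smul, hv, hAB, Fin.revPerm_apply, Fin.rev_rev]

-- `a`, `b` stand for the `D`-terms of the recurrence, or `0` in its first step.
lemma IsReflexive.of_three_term {n : ℕ} {q a b : Fin (n + 1) → MvPolynomial (Fin 2) ℝ}
    {r : Fin (n + 2) → MvPolynomial (Fin 2) ℝ} {C₁ C₂ : Matrix (Fin (n + 1)) (Fin (n + 1)) ℝ}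
    (hq : IsReflexive q) (hC : ReverseRel C₁ C₂) (hab : ∀ k, swapVars (a k) = b k.rev)
    (hx : ∀ k, X 0 * q k = r k.castSucc + ∑ j, C₁ k j • q j + a k)
    (hy : ∀ k, X 1 * q k = r k.succ + ∑ j, C₂ k j • q j + b k) :
    IsReflexive r := by
  refine IsReflexive.of_castSucc fun k => ?_
  have hr : r k.castSucc = X 0 * q k - ∑ j, C₁ k j • q j - a k := by
    rw [hx]; ring
  rw [hr, map_sub, map_sub, map_mul, swapVars_X_zero, hq, hq.swapVars_sum_smul hC, hab,
    Fin.rev_castSucc, hy]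
  ring

/-- If a system of polynomial vectors `Qₙ = (Qₙ,₀, …, Qₙ,ₙ)` with `Q₀,₀ = 1` satisfies
the three-term relations with coefficient matrices `C₁⁽ⁿ⁾ ⇌ C₂⁽ⁿ⁾` (for `n ≥ 0`) and
`D₁⁽ⁿ⁾ ⇌ D₂⁽ⁿ⁾` (for `n ≥ 1`; here `D₁ n` plays the role of `D⁽ⁿ⁺¹⁾`), then every
polynomial vector `Qₙ` is reflexive: `σ(Qₙ,ₖ) = Qₙ,ₙ₋ₖ`. -/
theorem reflexive_of_three_term_reverseRel
    (Q : (n : ℕ) → Fin (n + 1) → MvPolynomial (Fin 2) ℝ)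
    (hQ00 : Q 0 0 = 1)
    (C₁ C₂ : (n : ℕ) → Matrix (Fin (n + 1)) (Fin (n + 1)) ℝ)
    (D₁ D₂ : (n : ℕ) → Matrix (Fin (n + 2)) (Fin (n + 1)) ℝ)
    (hx0 : X 0 * Q 0 0 = Q 1 0 + C₁ 0 0 0 • Q 0 0)
    (hy0 : X 1 * Q 0 0 = Q 1 1 + C₂ 0 0 0 • Q 0 0)
    (hx : ∀ n : ℕ, ∀ k : Fin (n + 2),
      X 0 * Q (n + 1) k =
        Q (n + 2) k.castSucc + ∑ j, C₁ (n + 1) k j • Q (n + 1) j +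
          ∑ j : Fin (n + 1), D₁ n k j • Q n j)
    (hy : ∀ n : ℕ, ∀ k : Fin (n + 2),
      X 1 * Q (n + 1) k =
        Q (n + 2) k.succ + ∑ j, C₂ (n + 1) k j • Q (n + 1) j +
          ∑ j : Fin (n + 1), D₂ n k j • Q n j)
    (hC : ∀ n, ReverseRel (C₁ n) (C₂ n))
    (hD : ∀ n, ReverseRel (D₁ n) (D₂ n)) :
    ∀ (n : ℕ) (k : Fin (n + 1)), swapVars (Q n k) = Q n k.rev := by
  have hQ₀ : IsReflexive (Q 0) := isReflexive_fin_one (by rw [hQ00, map_one])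
  have hQ₁ : IsReflexive (Q 1) :=
    hQ₀.of_three_term (a := 0) (b := 0) (hC 0) (fun _ => map_zero _)
      (Fin.forall_fin_one.2 (by simpa using hx0)) (Fin.forall_fin_one.2 (by simpa using hy0))
  have hstep : ∀ n, IsReflexive (Q n) ∧ IsReflexive (Q (n + 1)) := by
    intro n
    induction n with
    | zero => exact ⟨hQ₀, hQ₁⟩
    | succ n ih =>
      exact ⟨ih.2, ih.2.of_three_term (hC (n + 1)) (ih.1.swapVars_sum_smul (hD n)) (hx n) (hy n)⟩
  exact fun n => (hstep n).1
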